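/- The block-Toeplitz matrices satisfy the identity H_ℓ(A,B,C,D) = H_ℓ(Ã,B̃,C,D) + H_ℓ(Ã,K,C,0) · H_ℓ(A,B,C,D), where Ã = A − K C and B̃ = B − K D. Equivalently, (I − H_ℓ(Ã,K,C,0)) H_ℓ(A,B,C,D) = H_ℓ(Ã,B̃,C,D). -/
import Mathlib

set_option maxHeartbeats 800000

open Matrix

noncomputable def blockToeplitz {nx p q : ℕ} (ℓ : ℕ)
    (A : Matrix (Fin nx) (Fin nx) ℝ) (B : Matrix (Fin nx) (Fin q) ℝ)
    (C : Matrix (Fin p) (Fin nx) ℝ) (D : Matrix (Fin p) (Fin q) ℝ) :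
    Matrix (Fin ℓ × Fin p) (Fin ℓ × Fin q) ℝ :=
  Matrix.of fun ia jb =>
    if ia.1 = jb.1 then D ia.2 jb.2
    else if jb.1 < ia.1 then (C * A ^ ((ia.1 : ℕ) - (jb.1 : ℕ) - 1) * B) ia.2 jb.2
    else 0

/-- block function with ℕ-valued comparisons -/
noncomputable def Hb {nx p q : ℕ} {ℓ : ℕ}
    (A : Matrix (Fin nx) (Fin nx) ℝ) (B : Matrix (Fin nx) (Fin q) ℝ)
    (C : Matrix (Fin p) (Fin nx) ℝ) (D : Matrix (Fin p) (Fin q) ℝ)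
    (i j : Fin ℓ) : Matrix (Fin p) (Fin q) ℝ :=
  if (i : ℕ) = (j : ℕ) then D
  else if (j : ℕ) < (i : ℕ) then C * A ^ ((i : ℕ) - (j : ℕ) - 1) * B else 0

lemma blockToeplitz_eq {nx p q : ℕ} (ℓ : ℕ)
    (A : Matrix (Fin nx) (Fin nx) ℝ) (B : Matrix (Fin nx) (Fin q) ℝ)
    (C : Matrix (Fin p) (Fin nx) ℝ) (D : Matrix (Fin p) (Fin q) ℝ) :
    blockToeplitz ℓ A B C D
      = Matrix.of fun ia jb => Hb A B C D ia.1 jb.1 ia.2 jb.2 := by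
  ext ⟨i, a⟩ ⟨j, b⟩
  simp only [blockToeplitz, Hb, Matrix.of_apply, Fin.ext_iff, Fin.lt_def]
  split_ifs <;> simp

lemma mul_of_blocks {ℓ p q r : ℕ}
    (f : Fin ℓ → Fin ℓ → Matrix (Fin p) (Fin q) ℝ)
    (g : Fin ℓ → Fin ℓ → Matrix (Fin q) (Fin r) ℝ) :
    (Matrix.of fun (ia : Fin ℓ × Fin p) (jb : Fin ℓ × Fin q) => f ia.1 jb.1 ia.2 jb.2) *
      (Matrix.of fun (ia : Fin ℓ × Fin q) (jb : Fin ℓ × Fin r) => g ia.1 jb.1 ia.2 jb.2)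
    = Matrix.of fun (ia : Fin ℓ × Fin p) (jb : Fin ℓ × Fin r) => (∑ k, f ia.1 k * g k jb.1) ia.2 jb.2 := by
  ext ⟨i, a⟩ ⟨j, b⟩
  simp [Matrix.mul_apply, Fintype.sum_prod_type, Matrix.sum_apply]

lemma pow_decomp {n : ℕ} (A At : Matrix (Fin n) (Fin n) ℝ) (m : ℕ) :
    A ^ m = At ^ m + ∑ t ∈ Finset.range m, At ^ t * (A - At) * A ^ (m - 1 - t) := by
  induction m with
  | zero => simp
  | succ m ih =>
    rw [pow_succ, ih, add_mul, Finset.sum_mul, Finset.sum_range_succ]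
    have h2 : ∀ t ∈ Finset.range m,
        At ^ t * (A - At) * A ^ (m - 1 - t) * A = At ^ t * (A - At) * A ^ (m + 1 - 1 - t) := by
      intro t ht
      rw [mul_assoc (At ^ t * (A - At)), ← pow_succ]
      congr 2
      simp at ht; omega
    rw [Finset.sum_congr rfl h2]
    have h3 : m + 1 - 1 - m = 0 := by omega
    rw [h3, pow_zero, mul_one, pow_succ]
    noncomm_ring

lemma key {nx nu ny ℓ : ℕ}
    (A : Matrix (Fin nx) (Fin nx) ℝ) (B : Matrix (Fin nx) (Fin nu) ℝ)
    (C : Matrix (Fin ny) (Fin nx) ℝ) (D : Matrix (Fin ny) (Fin nu) ℝ)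
    (K : Matrix (Fin nx) (Fin ny) ℝ) (i j : Fin ℓ) :
    Hb A B C D i j = Hb (A - K * C) (B - K * D) C D i j
      + ∑ k, Hb (A - K * C) K C (0 : Matrix (Fin ny) (Fin ny) ℝ) i k * Hb A B C D k j := by
  set At := A - K * C with hAt
  set F : ℕ → Matrix (Fin ny) (Fin nu) ℝ := fun n =>
    (if (i : ℕ) = n then (0 : Matrix (Fin ny) (Fin ny) ℝ)
      else if n < (i : ℕ) then C * At ^ ((i : ℕ) - n - 1) * K else 0) *
    (if n = (j : ℕ) then D
      else if (j : ℕ) < n then C * A ^ (n - (j : ℕ) - 1) * B else 0) with hF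
  have hsum : (∑ k, Hb At K C (0 : Matrix (Fin ny) (Fin ny) ℝ) i k * Hb A B C D k j)
      = ∑ n ∈ Finset.range ℓ, F n := by
    rw [← Fin.sum_univ_eq_sum_range F ℓ]
    exact Finset.sum_congr rfl fun k _ => rfl
  rw [hsum]
  rcases lt_trichotomy (i : ℕ) (j : ℕ) with h | h | h
  · have h0 : ∀ n ∈ Finset.range ℓ, F n = 0 := by
      intro n _
      simp only [hF]
      split_ifs <;> first | (exfalso; omega) | simp
    rw [Finset.sum_eq_zero h0]
    simp only [Hb]
    rw [if_neg (by omega), if_neg (by omega), if_neg (by omega), if_neg (by omega)]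
    simp
  · have h0 : ∀ n ∈ Finset.range ℓ, F n = 0 := by
      intro n _
      simp only [hF]
      split_ifs <;> first | (exfalso; omega) | simp
    rw [Finset.sum_eq_zero h0]
    simp [Hb, h]
  · -- j < i
    set m : ℕ := (i : ℕ) - (j : ℕ) - 1 with hm
    have hsub1 : Finset.range (i : ℕ) ⊆ Finset.range ℓ :=
      Finset.range_subset_range.mpr i.isLt.le
    have hz1 : ∀ n ∈ Finset.range ℓ, n ∉ Finset.range (i : ℕ) → F n = 0 := by
      intro n _ hn
      simp only [Finset.mem_range, not_lt] at hn
      simp only [hF]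
      split_ifs <;> first | (exfalso; omega) | simp
    rw [← Finset.sum_subset hsub1 hz1]
    have hsub2 : Finset.Ico (j : ℕ) (i : ℕ) ⊆ Finset.range (i : ℕ) := by
      intro n hn; simp only [Finset.mem_Ico] at hn; simp [hn.2]
    have hz2 : ∀ n ∈ Finset.range (i : ℕ), n ∉ Finset.Ico (j : ℕ) (i : ℕ) → F n = 0 := by
      intro n hn hn'
      simp only [Finset.mem_range] at hn
      simp only [Finset.mem_Ico, not_and, not_lt] at hn'
      have : n < (j : ℕ) := by by_contra hc; exact absurd (hn' (by omega)) (by omega)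
      simp only [hF]
      split_ifs <;> first | (exfalso; omega) | simp
    rw [← Finset.sum_subset hsub2 hz2]
    rw [Finset.sum_eq_sum_Ico_succ_bot h F]
    have hFj : F (j : ℕ) = C * At ^ m * K * D := by
      simp only [hF]
      rw [if_neg (by omega), if_pos h]
      simp [hm]
    rw [hFj, Finset.sum_Ico_eq_sum_range]
    have hrange : (i : ℕ) - ((j : ℕ) + 1) = m := by omega
    rw [hrange]
    have hterm : ∀ t ∈ Finset.range m,
        F ((j : ℕ) + 1 + t) = C * At ^ (m - 1 - t) * (K * C) * A ^ t * B := by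
      intro t ht
      simp only [Finset.mem_range] at ht
      simp only [hF]
      rw [if_neg (by omega), if_pos (by omega), if_neg (by omega), if_pos (by omega)]
      have e1 : (i : ℕ) - ((j : ℕ) + 1 + t) - 1 = m - 1 - t := by omega
      have e2 : (j : ℕ) + 1 + t - (j : ℕ) - 1 = t := by omega
      rw [e1, e2]
      simp only [Matrix.mul_assoc]
    rw [Finset.sum_congr rfl hterm]
    have hrefl : (∑ t ∈ Finset.range m, C * At ^ (m - 1 - t) * (K * C) * A ^ t * B)
        = ∑ t ∈ Finset.range m, C * At ^ t * (K * C) * A ^ (m - 1 - t) * B := by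
      rw [← Finset.sum_range_reflect (fun t => C * At ^ (m - 1 - t) * (K * C) * A ^ t * B) m]
      apply Finset.sum_congr rfl
      intro t ht
      simp only [Finset.mem_range] at ht
      have e : m - 1 - (m - 1 - t) = t := by omega
      rw [e]
    rw [hrefl]
    have hHb1 : Hb A B C D i j = C * A ^ m * B := by
      simp only [Hb]; rw [if_neg (by omega), if_pos h]
    have hHb2 : Hb At (B - K * D) C D i j = C * At ^ m * (B - K * D) := by
      simp only [Hb]; rw [if_neg (by omega), if_pos h]
    rw [hHb1, hHb2]
    have hpow := pow_decomp A At m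
    have hKC : A - At = K * C := by rw [hAt]; abel
    rw [hKC] at hpow
    calc C * A ^ m * B
        = C * (At ^ m + ∑ t ∈ Finset.range m, At ^ t * (K * C) * A ^ (m - 1 - t)) * B := by
          rw [← hpow]
      _ = C * At ^ m * B + ∑ t ∈ Finset.range m, C * At ^ t * (K * C) * A ^ (m - 1 - t) * B := by
          simp only [Matrix.mul_add, Matrix.add_mul, Matrix.mul_sum, Matrix.sum_mul,
            Matrix.mul_assoc]
      _ = C * At ^ m * (B - K * D) + (C * At ^ m * K * D
            + ∑ t ∈ Finset.range m, C * At ^ t * (K * C) * A ^ (m - 1 - t) * B) := by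
          simp only [Matrix.mul_sub, Matrix.mul_assoc]
          abel

/-- Toeplitz identity H_ℓ(A,B,C,D) = H_ℓ(Ã,B̃,C,D) + H_ℓ(Ã,K,C,0) H_ℓ(A,B,C,D)
with Ã = A − K C, B̃ = B − K D; equivalently
(I − H_ℓ(Ã,K,C,0)) H_ℓ(A,B,C,D) = H_ℓ(Ã,B̃,C,D). -/
theorem blockToeplitz_predictor_identity
    {nx nu ny : ℕ} (ℓ : ℕ) (hℓ : 1 ≤ ℓ)
    (A : Matrix (Fin nx) (Fin nx) ℝ) (B : Matrix (Fin nx) (Fin nu) ℝ)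
    (C : Matrix (Fin ny) (Fin nx) ℝ) (D : Matrix (Fin ny) (Fin nu) ℝ)
    (K : Matrix (Fin nx) (Fin ny) ℝ) :
    blockToeplitz ℓ A B C D
      = blockToeplitz ℓ (A - K * C) (B - K * D) C D
        + blockToeplitz ℓ (A - K * C) K C (0 : Matrix (Fin ny) (Fin ny) ℝ)
            * blockToeplitz ℓ A B C D ∧
    ((1 : Matrix (Fin ℓ × Fin ny) (Fin ℓ × Fin ny) ℝ)
        - blockToeplitz ℓ (A - K * C) K C (0 : Matrix (Fin ny) (Fin ny) ℝ))
        * blockToeplitz ℓ A B C D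
      = blockToeplitz ℓ (A - K * C) (B - K * D) C D := by
  have h1 : blockToeplitz ℓ A B C D
      = blockToeplitz ℓ (A - K * C) (B - K * D) C D
        + blockToeplitz ℓ (A - K * C) K C (0 : Matrix (Fin ny) (Fin ny) ℝ)
            * blockToeplitz ℓ A B C D := by
    rw [blockToeplitz_eq ℓ A B C D, blockToeplitz_eq ℓ (A - K * C) (B - K * D) C D,
      blockToeplitz_eq ℓ (A - K * C) K C 0, mul_of_blocks]
    ext ⟨i, a⟩ ⟨j, b⟩
    simp only [Matrix.add_apply, Matrix.of_apply]
    rw [key A B C D K i j]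
    simp [Matrix.add_apply]
  refine ⟨h1, ?_⟩
  rw [Matrix.sub_mul, Matrix.one_mul]
  nth_rewrite 1 [h1]
  exact add_sub_cancel_right _ _
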